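/- arXiv:2210.16997 — 4 statements merged into one kernel-verified Lean document; each statement's English description precedes it below -/
import Mathlib

section
/- Let θ ∈ (1/2, 1), let c > 0, and let (y_t)_{t≥T₀} be a sequence of nonnegative reals satisfying y_{t+1} ≤ y_t - c·y_t^{2θ} for all t ≥ T₀, with each y_t ∈ (0, (1/(2θc))^{1/(2θ-1)}). Suppose C₀ > 0 satisfies 1/(2θ-1) ≤ c·C₀^{2θ-1} and y_{T₀} ≤ C₀·T₀^{1/(1-2θ)}. Then y_t ≤ C₀·t^{1/(1-2θ)} for all t ≥ T₀. -/
/-!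
Write `β = 2θ - 1` and `f x = x - c x^(1+β)`. Since `f' = 1 - c (1+β) x^β`, `f` is increasing on
`[0, M]` with `M = (1/(2θc))^(1/β)`. Bernoulli's inequality for the negative exponent `-1/β`,
together with `1/β ≤ c C₀^β`, gives `f (C₀ s^(-1/β)) ≤ C₀ (s+1)^(-1/β)` for every real `s > 0`.
In the induction step, write `min (C₀ t^(-1/β)) M = C₀ s^(-1/β)` with a real `s ≥ t`; then
`y_{t+1} ≤ f y_t ≤ f (C₀ s^(-1/β)) ≤ C₀ (s+1)^(-1/β) ≤ C₀ (t+1)^(-1/β)`.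
-/

open Real

theorem monotoneOn_sub_mul_rpow {c p M : ℝ} (hc : 0 ≤ c) (hp : 1 ≤ p)
    (hM : c * p * M ^ (p - 1) ≤ 1) :
    MonotoneOn (fun x : ℝ => x - c * x ^ p) (Set.Icc 0 M) := by
  have hderiv (x : ℝ) :
      HasDerivAt (fun x : ℝ => x - c * x ^ p) (1 - c * (p * x ^ (p - 1))) x :=
    (hasDerivAt_id x).sub ((hasDerivAt_rpow_const (Or.inr hp)).const_mul c)
  refine monotoneOn_of_deriv_nonneg (convex_Icc 0 M)
    (HasDerivAt.continuousOn fun x _ => hderiv x)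
    (fun x _ => (hderiv x).differentiableAt.differentiableWithinAt) fun x hx => ?_
  rw [interior_Icc] at hx
  have hxM : x ^ (p - 1) ≤ M ^ (p - 1) := rpow_le_rpow hx.1.le hx.2.le (by linarith)
  rw [(hderiv x).deriv]
  nlinarith [mul_le_mul_of_nonneg_left hxM (by positivity : 0 ≤ c * p)]

theorem rpow_neg_mul_one_sub_div_le {s q : ℝ} (hs : 0 < s) (hq : 0 ≤ q) :
    s ^ (-q) * (1 - q / s) ≤ (s + 1) ^ (-q) := by
  have hlog : log (1 + s⁻¹) ≤ s⁻¹ := by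
    linarith [log_le_sub_one_of_pos (by positivity : 0 < 1 + s⁻¹)]
  have hbern : 1 - q / s ≤ (1 + s⁻¹) ^ (-q) := by
    rw [rpow_def_of_pos (by positivity)]
    refine le_trans ?_ (add_one_le_exp _)
    rw [div_eq_mul_inv]
    nlinarith
  calc s ^ (-q) * (1 - q / s) ≤ s ^ (-q) * (1 + s⁻¹) ^ (-q) := by gcongr
    _ = (s + 1) ^ (-q) := by
      rw [← mul_rpow hs.le (by positivity), mul_add, mul_inv_cancel₀ hs.ne', mul_one]

theorem sub_mul_rpow_le_rpow_neg_succ {β c C s : ℝ} (hβ : 0 < β) (hC : 0 < C)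
    (hcC : β⁻¹ ≤ c * C ^ β) (hs : 0 < s) :
    C * s ^ (-β⁻¹) - c * (C * s ^ (-β⁻¹)) ^ (1 + β) ≤ C * (s + 1) ^ (-β⁻¹) := by
  have hpow : (C * s ^ (-β⁻¹)) ^ (1 + β) = C ^ β * (C * s ^ (-β⁻¹)) / s := by
    rw [mul_rpow hC.le (by positivity), ← rpow_mul hs.le,
      show -β⁻¹ * (1 + β) = -β⁻¹ + -1 by field_simp; ring, rpow_add hs, rpow_neg_one,
      rpow_add hC, rpow_one]
    ring
  have hdecr : β⁻¹ * (C * s ^ (-β⁻¹)) / s ≤ c * (C * s ^ (-β⁻¹)) ^ (1 + β) := by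
    calc β⁻¹ * (C * s ^ (-β⁻¹)) / s ≤ c * C ^ β * (C * s ^ (-β⁻¹)) / s := by gcongr
      _ = c * (C * s ^ (-β⁻¹)) ^ (1 + β) := by rw [hpow]; ring
  calc C * s ^ (-β⁻¹) - c * (C * s ^ (-β⁻¹)) ^ (1 + β)
      ≤ C * s ^ (-β⁻¹) - β⁻¹ * (C * s ^ (-β⁻¹)) / s := sub_le_sub_left hdecr _
    _ = C * (s ^ (-β⁻¹) * (1 - β⁻¹ / s)) := by ring
    _ ≤ C * (s + 1) ^ (-β⁻¹) := by gcongr; exact rpow_neg_mul_one_sub_div_le hs (by positivity)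

theorem sub_mul_rpow_le_rpow_neg_succ_of_le {β c C M t y : ℝ} (hβ : 0 < β) (hc : 0 ≤ c)
    (hC : 0 < C) (hcC : β⁻¹ ≤ c * C ^ β) (hM : c * (1 + β) * M ^ β ≤ 1) (ht : 0 < t)
    (hy : y ∈ Set.Ioc 0 M) (hyt : y ≤ C * t ^ (-β⁻¹)) :
    y - c * y ^ (1 + β) ≤ C * (t + 1) ^ (-β⁻¹) := by
  set x := min (C * t ^ (-β⁻¹)) M
  have hyx : y ≤ x := le_min hyt hy.2
  have hx : 0 < x := hy.1.trans_le hyx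
  set s := (C / x) ^ β
  have hs : 0 < s := by positivity
  have hxs : x = C * s ^ (-β⁻¹) := by
    rw [← rpow_mul (by positivity), mul_neg, mul_inv_cancel₀ hβ.ne', rpow_neg_one, inv_div]
    field_simp
  have hts : t ≤ s := by
    have : t ^ β⁻¹ ≤ C / x := by
      rw [le_div_iff₀' hx]
      calc x * t ^ β⁻¹ ≤ C * t ^ (-β⁻¹) * t ^ β⁻¹ := by gcongr; exact min_le_left _ _
        _ = C := by rw [rpow_neg ht.le]; field_simp
    calc t = (t ^ β⁻¹) ^ β := by rw [← rpow_mul ht.le, inv_mul_cancel₀ hβ.ne', rpow_one]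
      _ ≤ s := rpow_le_rpow (by positivity) this hβ.le
  have hmono := monotoneOn_sub_mul_rpow hc (p := 1 + β) (M := M) (by linarith)
    (by rwa [add_sub_cancel_left]) ⟨hy.1.le, hy.2⟩ ⟨hx.le, min_le_right _ _⟩ hyx
  calc y - c * y ^ (1 + β) ≤ x - c * x ^ (1 + β) := hmono
    _ ≤ C * (s + 1) ^ (-β⁻¹) := hxs ▸ sub_mul_rpow_le_rpow_neg_succ hβ hC hcC hs
    _ ≤ C * (t + 1) ^ (-β⁻¹) :=
      mul_le_mul_of_nonneg_left (rpow_le_rpow_of_nonpos (by linarith) (by linarith)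
        (by simp [hβ.le])) hC.le

theorem stmt_4 (θ c : ℝ) (hθ : θ ∈ Set.Ioo (1/2 : ℝ) 1) (hc : 0 < c)
    (T₀ : ℕ) (hT₀ : 1 ≤ T₀) (y : ℕ → ℝ)
    (hrec : ∀ t ≥ T₀, y (t+1) ≤ y t - c * (y t) ^ (2*θ))
    (hmem : ∀ t ≥ T₀, y t ∈ Set.Ioo (0 : ℝ) ((1 / (2*θ*c)) ^ (1 / (2*θ - 1))))
    (C₀ : ℝ) (hC₀ : 0 < C₀)
    (hC₀' : 1 / (2*θ - 1) ≤ c * C₀ ^ (2*θ - 1))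
    (hinit : y T₀ ≤ C₀ * (T₀ : ℝ) ^ (1 / (1 - 2*θ))) :
    ∀ t ≥ T₀, y t ≤ C₀ * (t : ℝ) ^ (1 / (1 - 2*θ)) := by
  set β := 2 * θ - 1
  have hθ₀ : 0 < θ := by linarith [hθ.1]
  have hβ : 0 < β := by linarith [hθ.1]
  have h2θ : 2 * θ = 1 + β := by ring
  have hexp : 1 / (1 - 2 * θ) = -β⁻¹ := by rw [← one_div, ← div_neg, neg_sub]
  have hM : c * (1 + β) * ((1 / (2 * θ * c)) ^ (1 / β)) ^ β ≤ 1 := by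
    rw [← rpow_mul (by positivity), one_div_mul_cancel hβ.ne', rpow_one, ← h2θ]
    exact le_of_eq (by field_simp)
  rw [hexp] at hinit ⊢
  intro t ht
  induction t, ht using Nat.le_induction with
  | base => exact hinit
  | succ t ht ih =>
    have ht₀ : (0 : ℝ) < t := by exact_mod_cast (hT₀.trans ht)
    push_cast
    refine (hrec t ht).trans ?_
    rw [h2θ]
    exact sub_mul_rpow_le_rpow_neg_succ_of_le hβ hc.le hC₀ (by rwa [← one_div]) hM ht₀
      ⟨(hmem t ht).1, (hmem t ht).2.le⟩ ih
end

section
/- Let (y_t) be nonnegative reals with y_{t+1} ≤ y_t + β_t·y_t^{2θ} + C·δ_t where θ ∈ (1/2, 1), β_t := b + c·δ_t with b < 0, c > 0, δ_t = 2^{-t}, and C > 0. Suppose T₀ and C₀ > 1 are such that: (a) y_t ∈ (0, (1/(-2θβ_t))^{1/(2θ-1)}) for t ≥ T₀; (b) C₀/(2θ-1)·t^{2θ/(1-2θ)} + C₀^{2θ}·β_t·t^{2θ/(1-2θ)} + C·δ_t ≤ 0 for t ≥ T₀; (c) y_{T₀} ≤ C₀·T₀^{1/(1-2θ)}. Then y_t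 ≤ C₀·t^{1/(1-2θ)} for all t ≥ T₀. -/
/-!
Induction on `t`, with `p = 2θ`, `A = C₀ t^(1/(1-p))`, `A' = C₀ (t+1)^(1/(1-p))` and
`g(z) = z + β_t z^p`, which increases on `[0, Z_t]`, `Z_t` its critical point. Both cases
end with the tangent-line inequality `(t+1)^r ≥ t^r + r t^(r-1)` for the convex `x ↦ x^r`,
`r = 1/(1-p) < 0`. If `A ≤ Z_t`, then `y_{t+1} ≤ g(A) + Cδ_t ≤ A'` by (b). If `Z_t < A`,
either `Z_t ≤ A'` and `y_{t+1} < Z_{t+1} ≤ Z_t` suffices, or `Z_t ∈ [A', A]` and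
`y_{t+1} ≤ g(Z_t) + Cδ_t`; substituting `β_t = -Z_t^(1-p)/p` into (b) bounds this by a convex
function of `Z_t`, which is `≤ A'` at both endpoints.
-/

open Real Set

theorem convexOn_rpow_of_nonpos {r : ℝ} (hr : r ≤ 0) :
    ConvexOn ℝ (Ioi 0) fun x : ℝ ↦ x ^ r := by
  refine convexOn_of_hasDerivWithinAt2_nonneg (convex_Ioi 0)
    (f' := fun x ↦ r * x ^ (r - 1)) (f'' := fun x ↦ r * ((r - 1) * x ^ (r - 1 - 1)))
    (fun x hx ↦ (continuousAt_rpow_const x r (.inl (ne_of_gt hx))).continuousWithinAt)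
    (fun x hx ↦ ?_) (fun x hx ↦ ?_) (fun x hx ↦ ?_) <;> rw [interior_Ioi] at hx
  · exact (hasDerivAt_rpow_const (.inl (ne_of_gt hx))).hasDerivWithinAt
  · exact ((hasDerivAt_rpow_const (.inl (ne_of_gt hx))).const_mul r).hasDerivWithinAt
  · rw [← mul_assoc]
    exact mul_nonneg (mul_nonneg_of_nonpos_of_nonpos hr (by linarith))
      (rpow_nonneg (le_of_lt hx) _)

theorem convexOn_mul_add_mul_rpow {a K r : ℝ} (ha : 0 ≤ a) (hK : 0 ≤ K) (hr : r ≤ 0) :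
    ConvexOn ℝ (Ioi 0) fun x : ℝ ↦ a * x + K * x ^ r :=
  ((convexOn_id (convex_Ioi 0)).smul ha).add ((convexOn_rpow_of_nonpos hr).smul hK)

theorem rpow_add_mul_rpow_sub_one_le_add_one_rpow {r x : ℝ} (hr : r ≤ 0) (hx : 0 < x) :
    x ^ r + r * x ^ (r - 1) ≤ (x + 1) ^ r := by
  have h := (convexOn_rpow_of_nonpos hr).le_slope_of_hasDerivAt (mem_Ioi.mpr hx)
    (mem_Ioi.mpr (by linarith : 0 < x + 1)) (lt_add_one x)
    (hasDerivAt_rpow_const (.inl hx.ne'))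
  rw [slope_def_field, add_sub_cancel_left, div_one] at h
  linarith

theorem mul_rpow_sub_le_mul_add_one_rpow {p t c : ℝ} (hp : 1 < p) (ht : 0 < t) (hc : 0 ≤ c) :
    c * t ^ (1 / (1 - p)) - c / (p - 1) * t ^ (p / (1 - p)) ≤ c * (t + 1) ^ (1 / (1 - p)) := by
  have h := rpow_add_mul_rpow_sub_one_le_add_one_rpow
    (div_nonpos_of_nonneg_of_nonpos zero_le_one (by linarith : 1 - p ≤ 0)) ht
  have hp' : 1 - p ≠ 0 := by linarith
  rw [show 1 / (1 - p) - 1 = p / (1 - p) by field_simp; ring] at h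
  calc c * t ^ (1 / (1 - p)) - c / (p - 1) * t ^ (p / (1 - p))
      = c * (t ^ (1 / (1 - p)) + 1 / (1 - p) * t ^ (p / (1 - p))) := by
        rw [← neg_sub 1 p, div_neg]; ring
    _ ≤ c * (t + 1) ^ (1 / (1 - p)) := mul_le_mul_of_nonneg_left h hc

theorem mul_rpow_one_div_rpow {c s q : ℝ} (hc : 0 ≤ c) (hs : 0 ≤ s) (hq : q ≠ 0) :
    (c * s ^ (1 / q)) ^ q = c ^ q * s := by
  rw [mul_rpow hc (rpow_nonneg hs _), one_div, rpow_inv_rpow hs hq]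

/-- For `1 < p` and `β < 0`, the critical point of `z ↦ z + β * z ^ p` on `(0, ∞)`. -/
noncomputable def criticalPoint (p β : ℝ) : ℝ := (1 / (-p * β)) ^ (1 / (p - 1))

section criticalPoint

variable {p β : ℝ} (hp : 1 < p) (hβ : β < 0)
include hp hβ

theorem criticalPoint_pos : 0 < criticalPoint p β :=
  rpow_pos_of_pos (one_div_pos.mpr (by nlinarith)) _

theorem criticalPoint_rpow_sub_one : criticalPoint p β ^ (p - 1) = 1 / (-p * β) := by
  rw [criticalPoint, ← rpow_mul (one_div_pos.mpr (by nlinarith)).le,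
    one_div_mul_cancel (by linarith), rpow_one]

theorem criticalPoint_rpow_one_sub : criticalPoint p β ^ (1 - p) = -p * β := by
  rw [← neg_sub, rpow_neg (criticalPoint_pos hp hβ).le, criticalPoint_rpow_sub_one hp hβ,
    one_div, inv_inv]

theorem criticalPoint_add_mul_rpow :
    criticalPoint p β + β * criticalPoint p β ^ p = (1 - 1 / p) * criticalPoint p β := by
  have hZ := criticalPoint_pos hp hβ
  have hZp : criticalPoint p β ^ p = criticalPoint p β ^ (p - 1) * criticalPoint p β := by
    rw [rpow_sub_one hZ.ne', div_mul_cancel₀ _ hZ.ne']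
  rw [hZp, criticalPoint_rpow_sub_one hp hβ]
  field_simp [hβ.ne]
  ring

theorem criticalPoint_le_criticalPoint {β' : ℝ} (hβ' : β' ≤ β) :
    criticalPoint p β' ≤ criticalPoint p β :=
  rpow_le_rpow (one_div_pos.mpr (by nlinarith)).le
    (one_div_le_one_div_of_le (by nlinarith) (by nlinarith))
    (one_div_nonneg.mpr (by linarith))

theorem monotoneOn_add_mul_rpow :
    MonotoneOn (fun z ↦ z + β * z ^ p) (Icc 0 (criticalPoint p β)) := by
  have hd : ∀ z, HasDerivAt (fun z ↦ z + β * z ^ p) (1 + β * (p * z ^ (p - 1))) z :=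
    fun z ↦ (hasDerivAt_id z).add ((hasDerivAt_rpow_const (.inr hp.le)).const_mul β)
  refine monotoneOn_of_hasDerivWithinAt_nonneg (convex_Icc _ _)
    (fun z _ ↦ (hd z).continuousAt.continuousWithinAt) (fun z _ ↦ (hd z).hasDerivWithinAt)
    fun z hz ↦ ?_
  rw [interior_Icc] at hz
  have hz' : z ^ (p - 1) ≤ 1 / (-p * β) := by
    rw [← criticalPoint_rpow_sub_one hp hβ]
    exact rpow_le_rpow hz.1.le hz.2.le (by linarith)
  have : -p * β * z ^ (p - 1) ≤ 1 :=
    calc -p * β * z ^ (p - 1) ≤ -p * β * (1 / (-p * β)) :=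
          mul_le_mul_of_nonneg_left hz' (by nlinarith)
      _ = 1 := mul_one_div_cancel (by nlinarith)
  linarith

end criticalPoint

section rate

variable {p t C₀ : ℝ} (hp : 1 < p) (ht : 0 < t) (hC₀ : 0 < C₀)
include hp ht hC₀

theorem mul_add_mul_rpow_le_of_mem_Icc {z : ℝ}
    (hz : z ∈ Icc (C₀ * (t + 1) ^ (1 / (1 - p))) (C₀ * t ^ (1 / (1 - p)))) :
    (1 - 1 / p) * z + C₀ ^ p * t ^ (p / (1 - p)) / p * z ^ (1 - p)
      ≤ C₀ * (t + 1) ^ (1 / (1 - p)) + C₀ / (p - 1) * t ^ (p / (1 - p)) := by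
  set A := C₀ * t ^ (1 / (1 - p))
  set A' := C₀ * (t + 1) ^ (1 / (1 - p))
  set u := t ^ (1 / (1 - p))
  set v := t ^ (p / (1 - p))
  have hp1 : 1 - p ≠ 0 := by linarith
  have hmax := (convexOn_mul_add_mul_rpow (sub_nonneg.mpr ((div_le_one (by linarith)).mpr hp.le))
    (by positivity : 0 ≤ C₀ ^ p * v / p) (by linarith : 1 - p ≤ 0)).le_max_of_mem_Icc
    (mem_Ioi.mpr (by positivity)) (mem_Ioi.mpr (by positivity)) hz
  have hCC : C₀ ^ p * C₀ ^ (1 - p) = C₀ := by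
    rw [← rpow_add hC₀, add_sub_cancel, rpow_one]
  have hvt : v * t = u := by
    rw [← rpow_add_one ht.ne', show p / (1 - p) + 1 = 1 / (1 - p) by field_simp; ring]
  have hA : (1 - 1 / p) * A + C₀ ^ p * v / p * A ^ (1 - p) = A := by
    rw [mul_rpow_one_div_rpow hC₀.le ht.le hp1]
    linear_combination (v * t / p) * hCC + (C₀ / p) * hvt
  have hA' : (1 - 1 / p) * A' + C₀ ^ p * v / p * A' ^ (1 - p)
      = A' + (C₀ * u - C₀ / (p - 1) * v - A') / p + C₀ / (p - 1) * v := by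
    rw [mul_rpow_one_div_rpow hC₀.le (by linarith) hp1]
    field_simp [(by linarith : p - 1 ≠ 0)]
    linear_combination (p - 1) * (v * (t + 1)) * hCC + (p - 1) * C₀ * hvt
  have hbern : C₀ * u - C₀ / (p - 1) * v ≤ A' :=
    mul_rpow_sub_le_mul_add_one_rpow hp ht hC₀.le
  have := div_nonpos_of_nonpos_of_nonneg (sub_nonpos.mpr hbern) (by linarith : 0 ≤ p)
  rw [hA, hA'] at hmax
  rcases le_max_iff.mp hmax with h | h <;> linarith

variable {β D : ℝ}
  (hrate : C₀ / (p - 1) * t ^ (p / (1 - p)) + C₀ ^ p * β * t ^ (p / (1 - p)) + D ≤ 0)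
include hrate

theorem neg_of_rate_condition (hD : 0 < D) : β < 0 := by
  by_contra! hβ
  have : 0 < C₀ / (p - 1) * t ^ (p / (1 - p)) :=
    mul_pos (div_pos hC₀ (by linarith)) (rpow_pos_of_pos ht _)
  have : 0 ≤ C₀ ^ p * β * t ^ (p / (1 - p)) := by positivity
  linarith

theorem add_mul_rpow_add_le_at_rate :
    C₀ * t ^ (1 / (1 - p)) + β * (C₀ * t ^ (1 / (1 - p))) ^ p + D
      ≤ C₀ * (t + 1) ^ (1 / (1 - p)) := by
  rw [mul_rpow hC₀.le (rpow_nonneg ht.le _), ← rpow_mul ht.le, one_div_mul_eq_div]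
  linarith [mul_rpow_sub_le_mul_add_one_rpow hp ht hC₀.le]

theorem add_mul_rpow_add_le_at_criticalPoint (hβ : β < 0)
    (hlow : C₀ * (t + 1) ^ (1 / (1 - p)) ≤ criticalPoint p β)
    (hupp : criticalPoint p β ≤ C₀ * t ^ (1 / (1 - p))) :
    criticalPoint p β + β * criticalPoint p β ^ p + D ≤ C₀ * (t + 1) ^ (1 / (1 - p)) := by
  have hbound := mul_add_mul_rpow_le_of_mem_Icc hp ht hC₀ ⟨hlow, hupp⟩
  -- `β = -Z ^ (1 - p) / p` at the critical point `Z`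
  have hβZ : C₀ ^ p * β * t ^ (p / (1 - p))
      = -(C₀ ^ p * t ^ (p / (1 - p)) / p * criticalPoint p β ^ (1 - p)) := by
    rw [criticalPoint_rpow_one_sub hp hβ]
    field_simp
  rw [criticalPoint_add_mul_rpow hp hβ]
  linarith

theorem le_rate_succ {y y' : ℝ} (hβ : β < 0) (hy : y ∈ Icc 0 (criticalPoint p β))
    (hyA : y ≤ C₀ * t ^ (1 / (1 - p))) (hy' : y' ≤ y + β * y ^ p + D)
    (hy'Z : y' ≤ criticalPoint p β) : y' ≤ C₀ * (t + 1) ^ (1 / (1 - p)) := by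
  have hmono := monotoneOn_add_mul_rpow hp hβ
  rcases le_or_gt (C₀ * t ^ (1 / (1 - p))) (criticalPoint p β) with hAZ | hZA
  · calc y' ≤ y + β * y ^ p + D := hy'
      _ ≤ C₀ * t ^ (1 / (1 - p)) + β * (C₀ * t ^ (1 / (1 - p))) ^ p + D :=
        add_le_add_left (hmono hy ⟨by positivity, hAZ⟩ hyA) D
      _ ≤ C₀ * (t + 1) ^ (1 / (1 - p)) := add_mul_rpow_add_le_at_rate hp ht hC₀ hrate
  rcases le_or_gt (criticalPoint p β) (C₀ * (t + 1) ^ (1 / (1 - p))) with hZA' | hA'Z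
  · exact hy'Z.trans hZA'
  calc y' ≤ y + β * y ^ p + D := hy'
    _ ≤ criticalPoint p β + β * criticalPoint p β ^ p + D :=
      add_le_add_left (hmono hy ⟨(criticalPoint_pos hp hβ).le, le_rfl⟩ hy.2) D
    _ ≤ C₀ * (t + 1) ^ (1 / (1 - p)) :=
      add_mul_rpow_add_le_at_criticalPoint hp ht hC₀ hrate hβ hA'Z.le hZA.le

end rate

theorem stmt_10_general (θ b c C : ℝ) (hθ : θ ∈ Set.Ioo (1/2 : ℝ) 1)
    (hc : 0 < c) (hC : 0 < C)
    (δ : ℕ → ℝ) (hδ : ∀ t, δ t = (2 : ℝ)⁻¹ ^ t)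
    (β : ℕ → ℝ) (hβ : ∀ t, β t = b + c * δ t)
    (y : ℕ → ℝ)
    (hrec : ∀ t, y (t+1) ≤ y t + β t * (y t) ^ (2*θ) + C * δ t)
    (T₀ : ℕ) (hT₀ : 1 ≤ T₀) (C₀ : ℝ) (hC₀ : 1 < C₀)
    (ha : ∀ t ≥ T₀, y t ∈ Set.Ioo (0 : ℝ) ((1 / (-(2*θ) * β t)) ^ (1 / (2*θ - 1))))
    (hb' : ∀ t ≥ T₀, C₀ / (2*θ - 1) * (t : ℝ) ^ (2*θ / (1 - 2*θ))
            + C₀ ^ (2*θ) * β t * (t : ℝ) ^ (2*θ / (1 - 2*θ)) + C * δ t ≤ 0)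
    (hinit : y T₀ ≤ C₀ * (T₀ : ℝ) ^ (1 / (1 - 2*θ))) :
    ∀ t ≥ T₀, y t ≤ C₀ * (t : ℝ) ^ (1 / (1 - 2*θ)) := by
  have hp : 1 < 2 * θ := by linarith [hθ.1]
  have hC₀' : 0 < C₀ := by linarith
  have htpos : ∀ t ≥ T₀, (0 : ℝ) < t := fun t ht ↦ Nat.cast_pos.mpr (by omega)
  have hβneg : ∀ t ≥ T₀, β t < 0 := fun t ht ↦
    neg_of_rate_condition hp (htpos t ht) hC₀' (hb' t ht) (by rw [hδ]; positivity)
  have hβsucc : ∀ t, β (t + 1) ≤ β t := fun t ↦ by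
    rw [hβ, hβ, hδ, hδ]
    exact add_le_add_right (mul_le_mul_of_nonneg_left
      (pow_le_pow_of_le_one (by norm_num) (by norm_num) (Nat.le_succ t)) hc.le) b
  intro t ht
  induction t, ht using Nat.le_induction with
  | base => exact hinit
  | succ t ht ih =>
    push_cast
    exact le_rate_succ hp (htpos t ht) hC₀' (hb' t ht) (hβneg t ht)
      (Ioo_subset_Icc_self (ha t ht)) ih (hrec t) ((ha (t + 1) (by omega)).2.le.trans
        (criticalPoint_le_criticalPoint hp (hβneg t ht) (hβsucc t)))

theorem stmt_10 (θ b c C : ℝ) (hθ : θ ∈ Set.Ioo (1/2 : ℝ) 1)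
    (hb : b < 0) (hc : 0 < c) (hC : 0 < C)
    (δ : ℕ → ℝ) (hδ : ∀ t, δ t = (2 : ℝ)⁻¹ ^ t)
    (β : ℕ → ℝ) (hβ : ∀ t, β t = b + c * δ t)
    (y : ℕ → ℝ) (hy : ∀ t, 0 ≤ y t)
    (hrec : ∀ t, y (t+1) ≤ y t + β t * (y t) ^ (2*θ) + C * δ t)
    (T₀ : ℕ) (hT₀ : 1 ≤ T₀) (C₀ : ℝ) (hC₀ : 1 < C₀)
    (ha : ∀ t ≥ T₀, y t ∈ Set.Ioo (0 : ℝ) ((1 / (-(2*θ) * β t)) ^ (1 / (2*θ - 1))))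
    (hb' : ∀ t ≥ T₀, C₀ / (2*θ - 1) * (t : ℝ) ^ (2*θ / (1 - 2*θ))
            + C₀ ^ (2*θ) * β t * (t : ℝ) ^ (2*θ / (1 - 2*θ)) + C * δ t ≤ 0)
    (hinit : y T₀ ≤ C₀ * (T₀ : ℝ) ^ (1 / (1 - 2*θ))) :
    ∀ t ≥ T₀, y t ≤ C₀ * (t : ℝ) ^ (1 / (1 - 2*θ)) :=
  stmt_10_general θ b c C hθ hc hC δ hδ β hβ y hrec T₀ hT₀ C₀ hC₀ ha hb' hinit
end

section
/- Let θ ∈ (1/2, 1), η > 0, and let (y_t)_{t≥T₀} be nonnegative reals and (w_t) nonnegative reals satisfying y_t ≥ y_{t+1} + η·y_{t+1}^{2θ} - w_t for all t ≥ T₀. Suppose C₀ > 0 and T₀ satisfy: (a) y_{T₀} ≤ C₀·T₀^{1/(1-2θ)}; (b) (C₀/(2θ-1))·t^{2θ/(1-2θ)} + w_t ≤ η·C₀^{2θ}·(t+1)^{2θ/(1-2θ)} for all t ≥ T₀. Then y_t ≤ C₀·t^{1/(1-2θ)} for all t ≥ T₀. -/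
/-!
With `α = 1 / (1 - 2θ) ≤ -1`, the bound `b t = C₀ t ^ α` is a supersolution of the recursion:
convexity of `t ↦ t ^ α` gives `b t ≤ b (t + 1) + (C₀ / (2θ - 1)) t ^ (α - 1)`, so condition (b) says
`b t + w t ≤ b (t + 1) + η (b (t + 1)) ^ (2θ)`. Since `z ↦ z + η z ^ (2θ)` is increasing, the
recursion `y (t + 1) + η y (t + 1) ^ (2θ) ≤ y t + w t` then propagates `y t ≤ b t` to `t + 1`.
-/

open Real

theorem one_add_mul_self_le_rpow_one_add_of_le_neg_one {s p : ℝ} (hs : -1 < s) (hp : p ≤ -1) :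
    1 + p * s ≤ (1 + s) ^ p := by
  have hs₁ : 0 < 1 + s := by linarith
  -- `(1 + s) ^ p = (1 + u) ^ (-p)` with `u = -s / (1 + s)`, and `-p ≥ 1`.
  have hu : -1 ≤ -s / (1 + s) := by
    rw [le_div_iff₀ hs₁]; linarith
  have hinv : 1 + -s / (1 + s) = (1 + s)⁻¹ := by field_simp; ring
  have hbern := one_add_mul_self_le_rpow_one_add hu (p := -p) (by linarith)
  rw [hinv, inv_rpow hs₁.le, ← rpow_neg hs₁.le, neg_neg] at hbern
  have hshrink : s / (1 + s) ≤ s := by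
    rw [div_le_iff₀ hs₁]; nlinarith [sq_nonneg s]
  calc 1 + p * s ≤ 1 + p * (s / (1 + s)) := by nlinarith
    _ = 1 + -p * (-s / (1 + s)) := by ring
    _ ≤ (1 + s) ^ p := hbern

theorem rpow_add_mul_rpow_sub_one_le_rpow_add_one {x p : ℝ} (hx : 0 < x) (hp : p ≤ -1) :
    x ^ p + p * x ^ (p - 1) ≤ (x + 1) ^ p := by
  have hbern := one_add_mul_self_le_rpow_one_add_of_le_neg_one
    (by have := inv_pos.2 hx; linarith : -1 < x⁻¹) hp
  calc x ^ p + p * x ^ (p - 1) = (1 + p * x⁻¹) * x ^ p := by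
        rw [rpow_sub_one hx.ne']; field_simp
    _ ≤ (1 + x⁻¹) ^ p * x ^ p := by gcongr
    _ = (x + 1) ^ p := by
        rw [← mul_rpow (by positivity) hx.le]; congr 1; field_simp

theorem le_of_add_mul_rpow_le_add_mul_rpow {a b η r : ℝ} (hb : 0 ≤ b) (hη : 0 ≤ η) (hr : 0 ≤ r)
    (h : a + η * a ^ r ≤ b + η * b ^ r) : a ≤ b := by
  by_contra! hba
  have : η * b ^ r ≤ η * a ^ r := by gcongr
  linarith

theorem le_mul_rpow_add_one_of_le_mul_rpow {α η r C x y₀ y₁ w : ℝ} (hα : α ≤ -1) (hη : 0 ≤ η)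
    (hr : 0 ≤ r) (hC : 0 ≤ C) (hx : 0 < x)
    (hrec : y₁ + η * y₁ ^ r ≤ y₀ + w) (hy₀ : y₀ ≤ C * x ^ α)
    (hw : -α * C * x ^ (α - 1) + w ≤ η * (C * (x + 1) ^ α) ^ r) :
    y₁ ≤ C * (x + 1) ^ α := by
  have hb : 0 ≤ C * (x + 1) ^ α := by positivity
  have htangent : C * x ^ α ≤ C * (x + 1) ^ α + -α * C * x ^ (α - 1) := by
    nlinarith [mul_le_mul_of_nonneg_left (rpow_add_mul_rpow_sub_one_le_rpow_add_one hx hα) hC]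
  exact le_of_add_mul_rpow_le_add_mul_rpow hb hη hr (by linarith)

theorem stmt_14_general (θ η : ℝ) (hθ : θ ∈ Set.Ioo (1/2 : ℝ) 1) (hη : 0 < η)
    (T₀ : ℕ) (hT₀ : 1 ≤ T₀) (y w : ℕ → ℝ)
    (hrec : ∀ t ≥ T₀, y t ≥ y (t+1) + η * (y (t+1)) ^ (2*θ) - w t)
    (C₀ : ℝ) (hC₀ : 0 < C₀)
    (hinit : y T₀ ≤ C₀ * (T₀ : ℝ) ^ (1 / (1 - 2*θ)))
    (hcond : ∀ t ≥ T₀, (C₀ / (2*θ - 1)) * (t : ℝ) ^ (2*θ / (1 - 2*θ)) + w t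
              ≤ η * C₀ ^ (2*θ) * ((t : ℝ) + 1) ^ (2*θ / (1 - 2*θ))) :
    ∀ t ≥ T₀, y t ≤ C₀ * (t : ℝ) ^ (1 / (1 - 2*θ)) := by
  obtain ⟨hθ₁, hθ₂⟩ := hθ
  have hd : 1 - 2 * θ < 0 := by linarith
  have hα : 1 / (1 - 2 * θ) ≤ -1 := by rw [div_le_iff_of_neg hd]; linarith
  have hα_sub : 1 / (1 - 2 * θ) - 1 = 2 * θ / (1 - 2 * θ) := by
    rw [div_sub_one hd.ne]; congr 1; ring
  have hα_neg : -(1 / (1 - 2 * θ)) * C₀ = C₀ / (2 * θ - 1) := by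
    rw [← neg_sub, div_neg]; ring
  intro t ht
  induction t, ht using Nat.le_induction with
  | base => exact hinit
  | succ n hn ih =>
    have hn₀ : (0 : ℝ) < n := by exact_mod_cast hT₀.trans hn
    have hpow : (C₀ * ((n : ℝ) + 1) ^ (1 / (1 - 2 * θ))) ^ (2 * θ)
        = C₀ ^ (2 * θ) * ((n : ℝ) + 1) ^ (2 * θ / (1 - 2 * θ)) := by
      rw [mul_rpow hC₀.le (by positivity), ← rpow_mul (by positivity)]
      congr 2; field_simp
    push_cast
    refine le_mul_rpow_add_one_of_le_mul_rpow (r := 2 * θ) (w := w n) hα hη.le (by linarith)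
      hC₀.le hn₀ (by linarith [hrec n hn]) ih ?_
    rw [hpow, hα_neg, hα_sub, ← mul_assoc]
    exact hcond n hn

theorem stmt_14 (θ η : ℝ) (hθ : θ ∈ Set.Ioo (1/2 : ℝ) 1) (hη : 0 < η)
    (T₀ : ℕ) (hT₀ : 1 ≤ T₀) (y w : ℕ → ℝ)
    (hy : ∀ t ≥ T₀, 0 ≤ y t) (hw : ∀ t, 0 ≤ w t)
    (hrec : ∀ t ≥ T₀, y t ≥ y (t+1) + η * (y (t+1)) ^ (2*θ) - w t)
    (C₀ : ℝ) (hC₀ : 0 < C₀)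
    (hinit : y T₀ ≤ C₀ * (T₀ : ℝ) ^ (1 / (1 - 2*θ)))
    (hcond : ∀ t ≥ T₀, (C₀ / (2*θ - 1)) * (t : ℝ) ^ (2*θ / (1 - 2*θ)) + w t
              ≤ η * C₀ ^ (2*θ) * ((t : ℝ) + 1) ^ (2*θ / (1 - 2*θ))) :
    ∀ t ≥ T₀, y t ≤ C₀ * (t : ℝ) ^ (1 / (1 - 2*θ)) :=
  stmt_14_general θ η hθ hη T₀ hT₀ y w hrec C₀ hC₀ hinit hcond
end

section
/- Let f : ℝ^n → ℝ be L-smooth, bounded below, and satisfy the Łojasiewicz inequality at each critical point with exponent θ ∈ (0,1). Let x_{t+1} = x_t - η∇f(x_t) with constant step size η ∈ (0, 2/L), and assume the sequence (x_t) is bounded and converges to a critical point x_∞ with x_t eventually within the Łojasiewicz neighborhood of x_∞ and f(x_t) - f(x_∞) ∈ (0, (1/(2θ(η - Lη²/2)))^{1/(2θ-1)}) eventually. If θ ∈ (1/2, 1), then f(x_t) - f(x_∞) ≤ C₀·t^{1/(1-2θ)} for all sufficiently large t and suitable C₀ with 1/(2θ-1) ≤ C₀^{2θ-1}·(η - Lη²/2).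 -/
/-!
Smoothness gives the descent inequality `f(x - η∇f x) ≤ f x - c‖∇f x‖²` with
`c = η - Lη²/2 > 0`, and the Łojasiewicz inequality turns it into the recursion
`e_{t+1} ≤ e_t - c e_t^{2θ}` for the gaps `e_t = f(x_t) - f(x_∞) > 0`. For `p = 2θ > 1` the
sequence `u_t = C t^{1/(1-p)}` satisfies the reverse recursion `u_t - u_{t+1} ≤ c u_{t+1}^p`
as soon as `c C^{p-1}` is large (mean value theorem for `t ↦ t^{-1/(p-1)}`), and a comparison
argument then bounds `e_t` by `u_t`.
-/

open Filter InnerProductSpace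

section Descent

variable {E : Type*} [NormedAddCommGroup E] [InnerProductSpace ℝ E] [CompleteSpace E]
  {f : E → ℝ} {L : ℝ}

theorem le_add_inner_gradient_add_of_lipschitz_gradient (hf : Differentiable ℝ f)
    (hlip : ∀ x x', ‖gradient f x - gradient f x'‖ ≤ L * ‖x - x'‖) (x y : E) :
    f y ≤ f x + ⟪gradient f x, y - x⟫_ℝ + L / 2 * ‖y - x‖ ^ 2 := by
  set v := y - x
  -- `ψ` is antitone on `[0, 1]`; comparing `ψ 1` with `ψ 0` is the claim.
  set ψ : ℝ → ℝ := fun s ↦ f (x + s • v) - s * ⟪gradient f x, v⟫_ℝ - L / 2 * s ^ 2 * ‖v‖ ^ 2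
  have hψ (s : ℝ) :
      HasDerivAt ψ (⟪gradient f (x + s • v) - gradient f x, v⟫_ℝ - L * s * ‖v‖ ^ 2) s := by
    have hline : HasDerivAt (fun s : ℝ ↦ x + s • v) v s := by
      simpa using ((hasDerivAt_id s).smul_const v).const_add x
    have hfline := (hf _).hasGradientAt.hasFDerivAt.comp_hasDerivAt s hline
    refine ((hfline.sub ((hasDerivAt_id s).mul_const ⟪gradient f x, v⟫_ℝ)).sub
      (((hasDerivAt_pow 2 s).const_mul (L / 2)).mul_const (‖v‖ ^ 2))).congr_deriv ?_
    rw [inner_sub_left, toDual_apply_apply]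
    ring
  have hψ_nonpos (s : ℝ) (hs : 0 ≤ s) :
      ⟪gradient f (x + s • v) - gradient f x, v⟫_ℝ - L * s * ‖v‖ ^ 2 ≤ 0 := by
    have := calc ⟪gradient f (x + s • v) - gradient f x, v⟫_ℝ
        ≤ ‖gradient f (x + s • v) - gradient f x‖ * ‖v‖ := real_inner_le_norm _ _
      _ ≤ L * ‖s • v‖ * ‖v‖ := by gcongr; simpa using hlip (x + s • v) x
      _ = L * s * ‖v‖ ^ 2 := by rw [norm_smul, Real.norm_of_nonneg hs]; ring
    linarith
  have hanti : AntitoneOn ψ (Set.Icc 0 1) :=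
    antitoneOn_of_hasDerivWithinAt_nonpos (convex_Icc 0 1)
      (HasDerivAt.continuousOn fun s _ ↦ hψ s) (fun s _ ↦ (hψ s).hasDerivWithinAt)
      (fun s hs ↦ hψ_nonpos s (interior_subset hs).1)
  have := hanti (Set.left_mem_Icc.2 zero_le_one) (Set.right_mem_Icc.2 zero_le_one) zero_le_one
  simp only [ψ, one_smul, zero_smul, add_zero, one_pow, zero_pow two_ne_zero, one_mul, mul_one,
    zero_mul, mul_zero, sub_zero, v, add_sub_cancel] at this
  linarith

theorem le_sub_mul_norm_gradient_sq_of_lipschitz_gradient (hf : Differentiable ℝ f)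
    (hlip : ∀ x x', ‖gradient f x - gradient f x'‖ ≤ L * ‖x - x'‖) (x : E) (η : ℝ) :
    f (x - η • gradient f x) ≤ f x - (η - L * η ^ 2 / 2) * ‖gradient f x‖ ^ 2 := by
  have h := le_add_inner_gradient_add_of_lipschitz_gradient hf hlip x (x - η • gradient f x)
  rw [sub_sub_cancel_left, inner_neg_right, real_inner_smul_right, real_inner_self_eq_norm_sq,
    norm_neg, norm_smul, mul_pow, Real.norm_eq_abs, sq_abs] at h
  linarith

theorem sub_le_sub_mul_rpow_of_lojasiewicz (hf : Differentiable ℝ f)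
    (hlip : ∀ x x', ‖gradient f x - gradient f x'‖ ≤ L * ‖x - x'‖) {η θ a : ℝ} {x : E}
    (hc : 0 ≤ η - L * η ^ 2 / 2) (hloj : |f x - a| ^ θ ≤ ‖gradient f x‖) :
    f (x - η • gradient f x) - a ≤ f x - a - (η - L * η ^ 2 / 2) * |f x - a| ^ (2 * θ) := by
  have hsq : |f x - a| ^ (2 * θ) ≤ ‖gradient f x‖ ^ 2 := by
    rw [mul_comm, Real.rpow_mul (abs_nonneg _), Real.rpow_two]
    exact pow_le_pow_left₀ (by positivity) hloj 2
  have := le_sub_mul_norm_gradient_sq_of_lipschitz_gradient hf hlip x η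
  nlinarith [mul_le_mul_of_nonneg_left hsq hc]

end Descent

theorem rpow_neg_sub_rpow_neg_add_one_le {β t : ℝ} (hβ : 0 ≤ β) (ht : 1 ≤ t) :
    t ^ (-β) - (t + 1) ^ (-β) ≤ β * 2 ^ (β + 1) * (t + 1) ^ (-(β + 1)) := by
  obtain ⟨s, ⟨hts, -⟩, hs⟩ := exists_hasDerivAt_eq_slope (fun u : ℝ ↦ u ^ (-β))
    (fun u ↦ -β * u ^ (-β - 1)) (lt_add_one t)
    (fun u hu ↦ (Real.continuousAt_rpow_const _ _ (Or.inl (by linarith [hu.1]))).continuousWithinAt)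
    (fun u hu ↦ Real.hasDerivAt_rpow_const (Or.inl (by linarith [hu.1])))
  have hmvt : t ^ (-β) - (t + 1) ^ (-β) = β * s ^ (-(β + 1)) := by
    rw [add_sub_cancel_left, div_one] at hs
    rw [neg_add']
    linarith
  have hhalf : ((t + 1) / 2) ^ (-(β + 1)) = 2 ^ (β + 1) * (t + 1) ^ (-(β + 1)) := by
    rw [div_eq_inv_mul, Real.mul_rpow (by norm_num) (by linarith), Real.inv_rpow (by norm_num),
      Real.rpow_neg (by norm_num), inv_inv]
  rw [hmvt, mul_assoc, ← hhalf]
  exact mul_le_mul_of_nonneg_left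
    (Real.rpow_le_rpow_of_nonpos (by linarith) (by linarith) (by linarith)) hβ

theorem mul_rpow_sub_mul_rpow_add_one_le {c p C t : ℝ} (hp : 1 < p) (hC : 0 ≤ C)
    (hCc : 2 ^ (p / (p - 1)) / (p - 1) ≤ c * C ^ (p - 1)) (ht : 1 ≤ t) :
    C * t ^ (1 / (1 - p)) - C * (t + 1) ^ (1 / (1 - p)) ≤
      c * (C * (t + 1) ^ (1 / (1 - p))) ^ p := by
  set β := 1 / (p - 1) with hβ
  have hexp : 1 / (1 - p) = -β := by rw [hβ, ← neg_sub, div_neg]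
  have hp1 : p - 1 ≠ 0 := by linarith
  have hβp : β * p = β + 1 := by rw [hβ]; field_simp; ring
  have hpβ : p / (p - 1) = β + 1 := by rw [← hβp, hβ]; ring
  have hrhs : (C * (t + 1) ^ (-β)) ^ p = C ^ (p - 1) * C * (t + 1) ^ (-(β + 1)) := by
    rw [Real.mul_rpow hC (by positivity), ← Real.rpow_mul (by positivity),
      ← Real.rpow_add_one' hC (by linarith), neg_mul, hβp]
    ring_nf
  have hβc : β * 2 ^ (β + 1) ≤ c * C ^ (p - 1) := by
    rw [← hpβ, hβ, one_div_mul_eq_div]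
    exact hCc
  rw [hexp, hrhs]
  calc C * t ^ (-β) - C * (t + 1) ^ (-β)
      = C * (t ^ (-β) - (t + 1) ^ (-β)) := by ring
    _ ≤ C * (β * 2 ^ (β + 1) * (t + 1) ^ (-(β + 1))) := by
      gcongr; exact rpow_neg_sub_rpow_neg_add_one_le (by positivity) ht
    _ ≤ C * (c * C ^ (p - 1) * (t + 1) ^ (-(β + 1))) := by gcongr
    _ = c * (C ^ (p - 1) * C * (t + 1) ^ (-(β + 1))) := by ring

theorem le_of_le_sub_mul_rpow {e u : ℕ → ℝ} {c p : ℝ} {T : ℕ} (hc : 0 ≤ c) (hp : 0 ≤ p)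
    (he : ∀ t ≥ T, 0 ≤ e t ∧ e (t + 1) ≤ e t - c * e t ^ p)
    (hu : ∀ t ≥ T, 0 ≤ u (t + 1) ∧ u t - u (t + 1) ≤ c * u (t + 1) ^ p)
    (hbase : e T ≤ u T) : ∀ t ≥ T, e t ≤ u t := by
  intro t ht
  induction t, ht using Nat.le_induction with
  | base => exact hbase
  | succ t ht ih =>
    obtain ⟨he_nonneg, he_step⟩ := he t ht
    obtain ⟨hu_nonneg, hu_step⟩ := hu t ht
    rcases le_or_gt (e t) (u (t + 1)) with h | h
    · have := mul_nonneg hc (Real.rpow_nonneg he_nonneg p)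
      linarith
    · have := mul_le_mul_of_nonneg_left (Real.rpow_le_rpow hu_nonneg h.le hp) hc
      linarith

theorem exists_le_mul_rpow_of_le_sub_mul_rpow {e : ℕ → ℝ} {c p : ℝ} (hc : 0 < c) (hp : 1 < p)
    (he : ∀ᶠ t in atTop, 0 ≤ e t ∧ e (t + 1) ≤ e t - c * e t ^ p) (K : ℝ) :
    ∃ C > 0, K ≤ c * C ^ (p - 1) ∧
      ∃ T : ℕ, ∀ t ≥ T, e t ≤ C * (t : ℝ) ^ (1 / (1 - p)) := by
  obtain ⟨T₀, hT₀⟩ := eventually_atTop.1 he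
  set T := max T₀ 1
  set M := max K (2 ^ (p / (p - 1)) / (p - 1))
  set C := max ((M / c) ^ (p - 1)⁻¹) (e T / (T : ℝ) ^ (1 / (1 - p)))
  have hp1 : 0 < p - 1 := by linarith
  have hM : 0 < M := lt_max_of_lt_right (by positivity)
  have hC : 0 < C := lt_max_of_lt_left (by positivity)
  have hMC : M ≤ c * C ^ (p - 1) := by
    calc M = c * ((M / c) ^ (p - 1)⁻¹) ^ (p - 1) := by
          rw [← Real.rpow_mul (by positivity), inv_mul_cancel₀ hp1.ne', Real.rpow_one]
          field_simp
      _ ≤ c * C ^ (p - 1) :=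
          mul_le_mul_of_nonneg_left (Real.rpow_le_rpow (by positivity) (le_max_left _ _) hp1.le)
            hc.le
  refine ⟨C, hC, (le_max_left _ _).trans hMC, T, ?_⟩
  have hT1 : (1 : ℝ) ≤ T := by exact_mod_cast le_max_right T₀ 1
  refine le_of_le_sub_mul_rpow hc.le (by linarith) (fun t ht ↦ hT₀ t ((le_max_left _ _).trans ht))
    (fun t ht ↦ ⟨by positivity, ?_⟩) ?_
  · push_cast
    exact mul_rpow_sub_mul_rpow_add_one_le hp hC.le ((le_max_right _ _).trans hMC)
      (hT1.trans (by exact_mod_cast ht))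
  · calc e T = e T / (T : ℝ) ^ (1 / (1 - p)) * (T : ℝ) ^ (1 / (1 - p)) :=
          (div_mul_cancel₀ _ (by positivity)).symm
      _ ≤ C * (T : ℝ) ^ (1 / (1 - p)) := by gcongr; exact le_max_right _ _

theorem stmt_19_general (n : ℕ) (f : EuclideanSpace ℝ (Fin n) → ℝ) (L η θ : ℝ)
    (hL : 0 < L) (hη : η ∈ Set.Ioo (0 : ℝ) (2 / L))
    (hθ : θ ∈ Set.Ioo (1/2 : ℝ) 1)
    (hdiff : ContDiff ℝ 1 f)
    (hlip : ∀ x x' : EuclideanSpace ℝ (Fin n),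
      ‖gradient f x - gradient f x'‖ ≤ L * ‖x - x'‖)
    (x : ℕ → EuclideanSpace ℝ (Fin n))
    (hrec : ∀ t, x (t+1) = x t - η • gradient f (x t))
    (xlim : EuclideanSpace ℝ (Fin n))
    (hnbhd : ∃ μ > (0 : ℝ),
      (∀ x', ‖x' - xlim‖ ≤ μ → |f x' - f xlim| ^ θ ≤ ‖gradient f x'‖) ∧
      ∀ᶠ t in atTop, ‖x t - xlim‖ ≤ μ)
    (hgap : ∀ᶠ t in atTop, f (x t) - f xlim ∈
      Set.Ioo (0 : ℝ) ((1 / (2 * θ * (η - L * η ^ 2 / 2))) ^ (1 / (2 * θ - 1)))) :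
    ∃ C₀ > (0 : ℝ), 1 / (2 * θ - 1) ≤ C₀ ^ (2 * θ - 1) * (η - L * η ^ 2 / 2) ∧
      ∃ T₁ : ℕ, ∀ t ≥ T₁, f (x t) - f xlim ≤ C₀ * (t : ℝ) ^ (1 / (1 - 2 * θ)) := by
  obtain ⟨hη0, hη2⟩ := hη
  have hc : 0 < η - L * η ^ 2 / 2 := by
    have : η * L < 2 := (lt_div_iff₀ hL).1 hη2
    rw [show η - L * η ^ 2 / 2 = η * (2 - η * L) / 2 by ring]
    exact div_pos (mul_pos hη0 (by linarith)) two_pos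
  obtain ⟨μ, -, hloj, hnear⟩ := hnbhd
  have hdecay : ∀ᶠ t in atTop, 0 ≤ f (x t) - f xlim ∧ f (x (t + 1)) - f xlim ≤
      f (x t) - f xlim - (η - L * η ^ 2 / 2) * (f (x t) - f xlim) ^ (2 * θ) := by
    filter_upwards [hnear, hgap] with t hnear_t hgap_t
    have := sub_le_sub_mul_rpow_of_lojasiewicz (hdiff.differentiable one_ne_zero) hlip hc.le
      (hloj _ hnear_t)
    rw [abs_of_pos hgap_t.1, ← hrec] at this
    exact ⟨hgap_t.1.le, this⟩
  obtain ⟨C, hC, hCc, T, hT⟩ := exists_le_mul_rpow_of_le_sub_mul_rpow hc (by linarith [hθ.1])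
    hdecay (1 / (2 * θ - 1))
  exact ⟨C, hC, by linarith [mul_comm (C ^ (2 * θ - 1)) (η - L * η ^ 2 / 2)], T, hT⟩

theorem stmt_19 (n : ℕ) (f : EuclideanSpace ℝ (Fin n) → ℝ) (L η θ : ℝ)
    (hL : 0 < L) (hη : η ∈ Set.Ioo (0 : ℝ) (2 / L))
    (hθ : θ ∈ Set.Ioo (1/2 : ℝ) 1)
    (hdiff : ContDiff ℝ 1 f)
    (hlip : ∀ x x' : EuclideanSpace ℝ (Fin n),
      ‖gradient f x - gradient f x'‖ ≤ L * ‖x - x'‖)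
    (hbdd : BddBelow (Set.range f))
    (hloj : ∀ xstar : EuclideanSpace ℝ (Fin n), gradient f xstar = 0 →
      ∃ μ > (0 : ℝ), ∀ x, ‖x - xstar‖ ≤ μ →
        |f x - f xstar| ^ θ ≤ ‖gradient f x‖)
    (x : ℕ → EuclideanSpace ℝ (Fin n))
    (hrec : ∀ t, x (t+1) = x t - η • gradient f (x t))
    (hbound : ∃ R : ℝ, ∀ t, ‖x t‖ ≤ R)
    (xlim : EuclideanSpace ℝ (Fin n))
    (hconv : Tendsto x atTop (nhds xlim))
    (hcrit : gradient f xlim = 0)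
    (hnbhd : ∃ μ > (0 : ℝ),
      (∀ x', ‖x' - xlim‖ ≤ μ → |f x' - f xlim| ^ θ ≤ ‖gradient f x'‖) ∧
      ∀ᶠ t in atTop, ‖x t - xlim‖ ≤ μ)
    (hgap : ∀ᶠ t in atTop, f (x t) - f xlim ∈
      Set.Ioo (0 : ℝ) ((1 / (2 * θ * (η - L * η ^ 2 / 2))) ^ (1 / (2 * θ - 1)))) :
    ∃ C₀ > (0 : ℝ), 1 / (2 * θ - 1) ≤ C₀ ^ (2 * θ - 1) * (η - L * η ^ 2 / 2) ∧
      ∃ T₁ : ℕ, ∀ t ≥ T₁, f (x t) - f xlim ≤ C₀ * (t : ℝ) ^ (1 / (1 - 2 * θ)) :=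
  stmt_19_general n f L η θ hL hη hθ hdiff hlip x hrec xlim hnbhd hgap
end
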